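/- arXiv:1812.09986 — 2 statements merged into one kernel-verified Lean document; each statement's English description precedes it below -/
import Mathlib

section
/- Let N be a 5-dimensional nil power-associative evolution algebra over a field F of characteristic ≠ 2 which is indecomposable and not associative. Then N admits a natural basis (v_1, …, v_5) with v_1·v_1 = v_2 + v_3, v_2·v_2 = v_5, v_3·v_3 = −v_5, v_5·v_5 = 0, and one of the following holds: (a) v_4·v_4 = α·v_5 for some nonzero α ∈ F (the algebra N_{5,10}(α)); or (b) v_4·v_4 = α·(v_2 + v_3) for some nonzero α ∈ F (the algebra N_{5,11}(α)); or (c) v_4·v_4 = α·(v_2 + v_3) + β·v_5 for some nonzero α, β ∈ F (the algebra N_{5,12}(α,β)). -/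
/-!
Write `e i * e i = ∑ j, ω i j • e j` (`ω = structConst m e`) and draw an arrow `i → j` when
`ω i j ≠ 0`. Nilness forbids loops. Power-associativity of `e i ± e j` gives `A² A² = 0` and
forbids 2-cycles, and that of `e p ± (e q + e l)` shows that a path `p → q → l` ends in a sink,
`e l * e l = 0`; both use `2 ≠ 0`. Non-associativity produces an arrow `p → q` with `q` not a
sink, `q` points to a sink `z`, and `(e p)² (e p)² = 0` forces a second arrow `p → q'` into a
non-sink. Relabel so that `p, q, q', z = 0, 1, 2, 4`. If `e 3` is a sink as well, it annihilates
`A` but lies outside a hyperplane containing `A²`, so `A` decomposes. Otherwise the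
multiplication table has one of two shapes (according as `0 → 3` or not), and an explicit change
of natural basis exhibits `N_{5,10}(α)`, `N_{5,11}(α)` or `N_{5,12}(α, β)`.
-/

/-- Principal powers: `ppow m a k = a^(k+1)`. -/
def ppow {F A : Type*} [Field F] [AddCommGroup A] [Module F A]
    (m : A →ₗ[F] A →ₗ[F] A) (a : A) : ℕ → A
  | 0 => a
  | k + 1 => m (ppow m a k) a

open Module

noncomputable def structConst {F A ι : Type*} [Field F] [AddCommGroup A] [Module F A]
    (m : A →ₗ[F] A →ₗ[F] A) (e : Basis ι F A) (i j : ι) : F :=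
  e.repr (m (e i) (e i)) j

section Evolution

variable {F A ι : Type*} [Field F] [AddCommGroup A] [Module F A]
  {m : A →ₗ[F] A →ₗ[F] A} {e : Basis ι F A}
  (hcomm : ∀ x y : A, m x y = m y x) (hnat : ∀ i j, i ≠ j → m (e i) (e j) = 0)
  (hnil : ∀ a : A, ∃ k, ppow m a k = 0)
  (hpa : ∀ (a : A) (i j : ℕ), m (ppow m a i) (ppow m a j) = ppow m a (i + j + 1))
  (h2 : (2 : F) ≠ 0)

@[simp]
theorem repr_sq (i j : ι) : e.repr (m (e i) (e i)) j = structConst m e i j := rfl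

include hnat in
theorem mul_basis_left (i : ι) (x : A) : m (e i) x = e.repr x i • m (e i) (e i) := by
  have h : m (e i) = (e.coord i).smulRight (m (e i) (e i)) :=
    e.ext fun j => by
      rcases eq_or_ne i j with rfl | hij
      · simp
      · simp [hnat i j hij, hij]
  exact LinearMap.congr_fun h x

include hcomm hnat in
theorem mul_basis_right (x : A) (i : ι) : m x (e i) = e.repr x i • m (e i) (e i) := by
  rw [hcomm, mul_basis_left hnat]

include hnat in
theorem mul_eq_sum [Fintype ι] (x y : A) :
    m x y = ∑ i, (e.repr x i * e.repr y i) • m (e i) (e i) := by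
  conv_lhs => rw [← e.sum_repr x]
  simp only [map_sum, map_smul, LinearMap.sum_apply, LinearMap.smul_apply]
  exact Finset.sum_congr rfl fun i _ => by rw [mul_basis_left hnat i y, smul_smul]

include hcomm hnat hnil in
theorem structConst_self (i : ι) : structConst m e i i = 0 := by
  have hpow : ∀ n, ppow m (e i) (n + 1) = structConst m e i i ^ n • m (e i) (e i) := by
    intro n
    induction n with
    | zero => simp [ppow]
    | succ n ih =>
      rw [ppow, ih, map_smul, LinearMap.smul_apply, mul_basis_right hcomm hnat, repr_sq,
        smul_smul, pow_succ]
  obtain ⟨_ | n, hn⟩ := hnil (e i)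
  · exact absurd hn (e.ne_zero i)
  · rw [hpow n, smul_eq_zero] at hn
    rcases hn with hn | hn
    · exact (pow_eq_zero_iff'.mp hn).1
    · simp [← repr_sq, hn]

include hcomm hnat hnil hpa in
theorem sq_mul_sq_self (i : ι) : m (m (e i) (e i)) (m (e i) (e i)) = 0 := by
  have h := hpa (e i) 1 1
  simp only [ppow, mul_basis_right hcomm hnat (m (e i) (e i)), repr_sq,
    structConst_self hcomm hnat hnil, zero_smul, map_zero, LinearMap.zero_apply] at h
  exact h

include hcomm hnat hnil hpa in
/-- Power-associativity `a² a² = a⁴` for `a = e i + t • e j`. -/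
theorem smul_sq_mul_sq_eq {i j : ι} (hij : i ≠ j) (t : F) :
    (2 * t ^ 2) • m (m (e i) (e i)) (m (e j) (e j)) =
      (t * structConst m e i j * structConst m e j i) •
        (m (e i) (e i) + t ^ 2 • m (e j) (e j)) := by
  have hmul : ∀ x, m x (e i + t • e j) =
      e.repr x i • m (e i) (e i) + (t * e.repr x j) • m (e j) (e j) := by
    intro x
    rw [map_add, map_smul, mul_basis_right hcomm hnat x i, mul_basis_right hcomm hnat x j,
      smul_smul]
  have h1 : ppow m (e i + t • e j) 1 = m (e i) (e i) + t ^ 2 • m (e j) (e j) := by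
    change m (e i + t • e j) (e i + t • e j) = _
    rw [hmul]
    simp only [map_add, map_smul, Basis.repr_self, Finsupp.smul_single, Finsupp.coe_add,
      Pi.add_apply, Finsupp.single_eq_same, Finsupp.single_eq_of_ne hij,
      Finsupp.single_eq_of_ne hij.symm, smul_eq_mul, mul_one, add_zero, zero_add, one_smul]
    module
  have h3 : ppow m (e i + t • e j) 3 = (t * structConst m e i j * structConst m e j i) •
      (m (e i) (e i) + t ^ 2 • m (e j) (e j)) := by
    simp only [ppow] at h1 ⊢
    rw [h1, hmul, hmul]
    simp only [map_add, map_smul, Finsupp.coe_add, Finsupp.coe_smul, Pi.add_apply, Pi.smul_apply,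
      smul_eq_mul, repr_sq, structConst_self hcomm hnat hnil, mul_zero, zero_add, add_zero]
    module
  rw [← h3, ← hpa _ 1 1, h1]
  simp only [map_add, map_smul, LinearMap.add_apply, LinearMap.smul_apply,
    sq_mul_sq_self hcomm hnat hnil hpa, hcomm (m (e j) (e j)) (m (e i) (e i))]
  module

include hcomm hnat hnil hpa h2 in
theorem sq_mul_sq (i j : ι) : m (m (e i) (e i)) (m (e j) (e j)) = 0 := by
  rcases eq_or_ne i j with rfl | hij
  · exact sq_mul_sq_self hcomm hnat hnil hpa i
  have hpos := smul_sq_mul_sq_eq hcomm hnat hnil hpa hij 1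
  have hneg := smul_sq_mul_sq_eq hcomm hnat hnil hpa hij (-1)
  have h4 : (2 * 2 : F) • m (m (e i) (e i)) (m (e j) (e j)) = 0 := by
    linear_combination (norm := module) hpos + hneg
  exact (smul_eq_zero.mp h4).resolve_left (mul_ne_zero h2 h2)

include hcomm hnat hnil hpa h2 in
theorem sum_structConst_mul_eq_zero [Fintype ι] (i j l : ι) :
    ∑ k, structConst m e i k * structConst m e j k * structConst m e k l = 0 := by
  have h := congrArg (fun x => e.repr x l) (sq_mul_sq hcomm hnat hnil hpa h2 i j)
  simpa [mul_eq_sum hnat (m (e i) (e i))] using h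

include hcomm hnat hnil hpa h2 in
theorem structConst_eq_zero_of_ne_zero {i j : ι} (hij : structConst m e i j ≠ 0) :
    structConst m e j i = 0 := by
  by_contra hji
  have hne : i ≠ j := by rintro rfl; exact hij (structConst_self hcomm hnat hnil i)
  have h := smul_sq_mul_sq_eq hcomm hnat hnil hpa hne 1
  rw [sq_mul_sq hcomm hnat hnil hpa h2, smul_zero, eq_comm, smul_eq_zero] at h
  have hsum := h.resolve_left (by simpa using mul_ne_zero hij hji)
  rw [one_pow, one_smul, add_eq_zero_iff_eq_neg] at hsum
  apply hij
  rw [structConst, hsum, map_neg, Finsupp.neg_apply, repr_sq, structConst_self hcomm hnat hnil,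
    neg_zero]

include hcomm hnat hnil hpa h2 in
theorem sq_eq_zero_of_structConst_ne_zero {p q l : ι} (hpq : structConst m e p q ≠ 0)
    (hql : structConst m e q l ≠ 0) : m (e l) (e l) = 0 := by
  have hself := structConst_self hcomm hnat hnil (e := e)
  have hqp := structConst_eq_zero_of_ne_zero hcomm hnat hnil hpa h2 hpq
  have hlq := structConst_eq_zero_of_ne_zero hcomm hnat hnil hpa h2 hql
  have hp_q : p ≠ q := by rintro rfl; exact hpq (hself p)
  have hq_l : q ≠ l := by rintro rfl; exact hql (hself q)
  have hl_p : l ≠ p := by rintro rfl; exact hql hqp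
  have h4 : ∀ t : F, ppow m (e p + t • (e q + e l)) 3 = 0 := by
    intro t
    rw [← hpa _ 1 1]
    simp [ppow, hnat _ _ hp_q, hnat _ _ hq_l, hnat _ _ hl_p, hnat _ _ hp_q.symm,
      hnat _ _ hq_l.symm, hnat _ _ hl_p.symm, sq_mul_sq hcomm hnat hnil hpa h2]
  have hmul : ∀ (t : F) x, m x (e p + t • (e q + e l)) = e.repr x p • m (e p) (e p) +
      t • (e.repr x q • m (e q) (e q) + e.repr x l • m (e l) (e l)) := by
    intro t x
    rw [map_add, map_smul, map_add, mul_basis_right hcomm hnat x p,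
      mul_basis_right hcomm hnat x q, mul_basis_right hcomm hnat x l]
  have hpos := h4 1
  have hneg := h4 (-1)
  simp only [ppow, hmul] at hpos hneg
  simp only [map_add, map_smul, map_neg, smul_add, smul_neg, one_smul, neg_smul, neg_neg,
    Basis.repr_self, Finsupp.coe_add, Finsupp.coe_smul, Finsupp.coe_neg, Pi.add_apply,
    Pi.smul_apply, Pi.neg_apply, smul_eq_mul, Finsupp.single_eq_same, Finsupp.single_eq_of_ne,
    hp_q, hq_l, hl_p, hp_q.symm, hq_l.symm, hl_p.symm, ne_eq, not_false_eq_true, repr_sq, hself,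
    hqp, hlq, mul_zero, neg_zero, add_zero, zero_add] at hpos hneg
  have h : (2 * structConst m e p q * structConst m e q l) • m (e l) (e l) = 0 := by
    linear_combination (norm := module) hpos + hneg
  exact (smul_eq_zero.mp h).resolve_left (mul_ne_zero (mul_ne_zero h2 hpq) hql)

include hnat in
theorem sq_mul_eq_zero [Fintype ι] {i : ι}
    (hi : ∀ k, structConst m e i k ≠ 0 → m (e k) (e k) = 0) (z : A) :
    m (m (e i) (e i)) z = 0 := by
  rw [mul_eq_sum hnat]
  refine Finset.sum_eq_zero fun k _ => ?_
  by_cases hk : structConst m e i k = 0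
  · simp [hk]
  · simp [hi k hk]

include hcomm hnat in
theorem exists_structConst_ne_zero_of_not_assoc [Fintype ι]
    (hnotassoc : ¬ ∀ x y z : A, m (m x y) z = m x (m y z)) :
    ∃ p q, structConst m e p q ≠ 0 ∧ m (e q) (e q) ≠ 0 := by
  by_contra! h
  have hzero : ∀ x y z : A, m (m x y) z = 0 := by
    intro x y z
    rw [mul_eq_sum hnat x y, map_sum, LinearMap.sum_apply]
    exact Finset.sum_eq_zero fun i _ => by
      rw [map_smul, LinearMap.smul_apply, sq_mul_eq_zero hnat (h i) z, smul_zero]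
  exact hnotassoc fun x y z => by rw [hzero, hcomm x, hzero]

include hcomm hnat hnil hpa in
theorem exists_ne_structConst_ne_zero [Fintype ι] {p q : ι} (hpq : structConst m e p q ≠ 0)
    (hq : m (e q) (e q) ≠ 0) : ∃ q', q' ≠ q ∧ structConst m e p q' ≠ 0 ∧ m (e q') (e q') ≠ 0 := by
  by_contra! h
  have hpp := sq_mul_sq_self hcomm hnat hnil hpa p
  rw [mul_eq_sum hnat, Finset.sum_eq_single q] at hpp
  · exact hq ((smul_eq_zero.mp hpp).resolve_left (by simpa using mul_ne_zero hpq hpq))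
  · intro k _ hk
    by_cases hpk : structConst m e p k = 0
    · simp [hpk]
    · simp [h k hk hpk]
  · simp

theorem exists_structConst_ne_zero_of_sq_ne_zero {i : ι} (hi : m (e i) (e i) ≠ 0) :
    ∃ j, structConst m e i j ≠ 0 := by
  by_contra! h
  exact hi (e.repr.map_eq_zero_iff.mp (Finsupp.ext h))

theorem structConst_reindex {ι' : Type*} (σ : ι' ≃ ι) (i j : ι') :
    structConst m (e.reindex σ.symm) i j = structConst m e (σ i) (σ j) := by
  simp only [structConst, Basis.reindex_apply, Basis.repr_reindex_apply, Equiv.symm_symm]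

end Evolution

section Decomposition
variable {F A : Type*} [Field F] [AddCommGroup A] [Module F A]

def IsIdeal (m : A →ₗ[F] A →ₗ[F] A) (I : Submodule F A) : Prop :=
  ∀ x ∈ I, ∀ y, m x y ∈ I

def IsDecomposable (m : A →ₗ[F] A →ₗ[F] A) : Prop :=
  ∃ I J : Submodule F A, IsIdeal m I ∧ IsIdeal m J ∧ I ≠ ⊥ ∧ J ≠ ⊥ ∧ IsCompl I J

theorem isDecomposable_of_mul_eq_zero_of_apply_ne_zero {m : A →ₗ[F] A →ₗ[F] A}
    (f : A →ₗ[F] F) (hf : ∀ y z, f (m y z) = 0) {x w : A} (hx : ∀ y, m x y = 0)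
    (hfx : f x ≠ 0) (hw : w ≠ 0) (hfw : f w = 0) : IsDecomposable m := by
  refine ⟨F ∙ x, LinearMap.ker f, ?_, fun y _ z => hf y z, ?_, ?_, ?_⟩
  · intro y hy z
    obtain ⟨t, rfl⟩ := Submodule.mem_span_singleton.mp hy
    simp [hx]
  · simpa using fun h => hfx (by simp [h])
  · exact (Submodule.ne_bot_iff _).mpr ⟨w, hfw, hw⟩
  · refine (Submodule.isCompl_span_singleton_of_isCoatom_of_notMem
      (LinearMap.isCoatom_ker_of_surjective fun t => ⟨(t / f x) • x, ?_⟩) hfx).symm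
    simp [hfx]

end Decomposition

section NormalForm
variable {F A : Type*} [Field F] [AddCommGroup A] [Module F A]

/-- `v` is a natural basis in which `A` is `N_{5,10}(α)`, `N_{5,11}(α)` or `N_{5,12}(α, β)`. -/
def IsN5Basis (m : A →ₗ[F] A →ₗ[F] A) (v : Basis (Fin 5) F A) : Prop :=
  (∀ i j : Fin 5, i ≠ j → m (v i) (v j) = 0) ∧
  m (v 0) (v 0) = v 1 + v 2 ∧ m (v 1) (v 1) = v 4 ∧ m (v 2) (v 2) = -v 4 ∧ m (v 4) (v 4) = 0 ∧
  ((∃ α : F, α ≠ 0 ∧ m (v 3) (v 3) = α • v 4) ∨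
    (∃ α : F, α ≠ 0 ∧ m (v 3) (v 3) = α • (v 1 + v 2)) ∨
    (∃ α β : F, α ≠ 0 ∧ β ≠ 0 ∧ m (v 3) (v 3) = α • (v 1 + v 2) + β • v 4))

theorem isN5Basis_of_sq_three {m : A →ₗ[F] A →ₗ[F] A} {v : Basis (Fin 5) F A}
    (hv : ∀ i j : Fin 5, i ≠ j → m (v i) (v j) = 0) (h0 : m (v 0) (v 0) = v 1 + v 2)
    (h1 : m (v 1) (v 1) = v 4) (h2 : m (v 2) (v 2) = -v 4) (h4 : m (v 4) (v 4) = 0)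
    {γ δ : F} (h3 : m (v 3) (v 3) = γ • (v 1 + v 2) + δ • v 4) (hγδ : γ ≠ 0 ∨ δ ≠ 0) :
    IsN5Basis m v := by
  refine ⟨hv, h0, h1, h2, h4, ?_⟩
  rcases eq_or_ne γ 0 with rfl | hγ
  · exact Or.inl ⟨δ, hγδ.resolve_left (not_not.mpr rfl), by simpa using h3⟩
  rcases eq_or_ne δ 0 with rfl | hδ
  · exact Or.inr (Or.inl ⟨γ, hγ, by simpa using h3⟩)
  · exact Or.inr (Or.inr ⟨γ, δ, hγ, hδ, h3⟩)

theorem exists_basis_coe_eq {ι : Type*} [Fintype ι] (e : Basis ι F A) (V : ι → A)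
    (hV : ∀ k, ∃ c : ι → F, ∑ i, c i • V i = e k) : ∃ v : Basis ι F A, ⇑v = V := by
  have : FiniteDimensional F A := e.finiteDimensional_of_finite
  have hspan : ⊤ ≤ Submodule.span F (Set.range V) := by
    rw [← e.span_eq, Submodule.span_le]
    rintro _ ⟨k, rfl⟩
    exact (Submodule.mem_span_range_iff_exists_fun F).mpr (hV k)
  exact ⟨basisOfTopLeSpanOfCardEqFinrank V hspan (finrank_eq_card_basis e).symm,
    coe_basisOfTopLeSpanOfCardEqFinrank ..⟩

end NormalForm

theorem exists_perm_fin_five {a b c d : Fin 5} (hab : a ≠ b) (hac : a ≠ c) (had : a ≠ d)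
    (hbc : b ≠ c) (hbd : b ≠ d) (hcd : c ≠ d) :
    ∃ σ : Equiv.Perm (Fin 5), σ 0 = a ∧ σ 1 = b ∧ σ 2 = c ∧ σ 4 = d := by
  obtain ⟨r, -, hr⟩ := Finset.exists_mem_notMem_of_card_lt_card
    (s := {a, b, c, d}) (t := Finset.univ) (Finset.card_le_four.trans_lt (by simp))
  simp only [Finset.mem_insert, Finset.mem_singleton, not_or] at hr
  have hinj : Function.Injective ![a, b, c, r, d] := by
    intro i j h
    fin_cases i <;> fin_cases j <;> simp_all [eq_comm]
  exact ⟨Equiv.ofBijective _ (Finite.injective_iff_bijective.mp hinj), rfl, rfl, rfl, rfl⟩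

section FinFive

variable {F A : Type*} [Field F] [AddCommGroup A] [Module F A]
  {m : A →ₗ[F] A →ₗ[F] A} {e : Basis (Fin 5) F A}
  (hcomm : ∀ x y : A, m x y = m y x) (hnat : ∀ i j, i ≠ j → m (e i) (e j) = 0)
  (hnil : ∀ a : A, ∃ k, ppow m a k = 0)
  (hpa : ∀ (a : A) (i j : ℕ), m (ppow m a i) (ppow m a j) = ppow m a (i + j + 1))
  (h2 : (2 : F) ≠ 0)

theorem sq_eq_sum_fin_five (i : Fin 5) :
    m (e i) (e i) = structConst m e i 0 • e 0 + structConst m e i 1 • e 1 +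
      structConst m e i 2 • e 2 + structConst m e i 3 • e 3 + structConst m e i 4 • e 4 := by
  rw [← e.sum_repr (m (e i) (e i)), Fin.sum_univ_five]
  simp only [repr_sq]

include hnat in
theorem exists_isN5Basis_of_sq_three_mem_span
    {b₁ b₂ d₁ b₁' b₂' d₂ μ₁ μ₂ : F} (hb₂ : b₂ ≠ 0) (hμ₂ : μ₂ ≠ 0)
    (hs0 : m (e 0) (e 0) = b₁ • e 1 + b₂ • e 2 + d₁ • e 4)
    (hs1 : m (e 1) (e 1) = μ₁ • e 4) (hs2 : m (e 2) (e 2) = μ₂ • e 4)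
    (hs3 : m (e 3) (e 3) = b₁' • e 1 + b₂' • e 2 + d₂ • e 4) (hs3ne : m (e 3) (e 3) ≠ 0)
    (hs4 : m (e 4) (e 4) = 0)
    (H1 : μ₁ * b₁ ^ 2 + μ₂ * b₂ ^ 2 = 0) (H2 : μ₁ * b₁ * b₁' + μ₂ * b₂ * b₂' = 0) :
    ∃ v : Basis (Fin 5) F A, IsN5Basis m v := by
  have hQ : μ₂ * b₂ ^ 2 ≠ 0 := by positivity
  have hμb₁ : μ₁ * b₁ ≠ 0 := fun h => hQ (by linear_combination H1 - b₁ * h)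
  have hb₁ : b₁ ≠ 0 := right_ne_zero_of_mul hμb₁
  have hb' : b₁' * b₂ = b₁ * b₂' := by
    have h : (μ₁ * b₁) * (b₁' * b₂ - b₁ * b₂') = 0 := by linear_combination b₂ * H2 - b₂' * H1
    linear_combination (mul_eq_zero.mp h).resolve_left hμb₁
  have hγδ : b₂' / b₂ ≠ 0 ∨ (d₂ - b₂' / b₂ * d₁) / (μ₂ * b₂ ^ 2) ≠ 0 := by
    by_contra! h
    obtain ⟨hγ, hδ⟩ := h
    have hb₂' : b₂' = 0 := by simpa [hb₂] using hγ
    have hd₂ : d₂ = 0 := by simpa [hb₂', hQ] using hδ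
    have hb₁' : b₁' = 0 := by simpa [hb₂', hb₂] using hb'
    exact hs3ne (by simp [hs3, hb₁', hb₂', hd₂])
  obtain ⟨v, hv⟩ := exists_basis_coe_eq e
    ![e 0, b₂ • e 2, b₁ • e 1 + d₁ • e 4, e 3, (μ₂ * b₂ ^ 2) • e 4] fun k => by
      fin_cases k
      · exact ⟨![1, 0, 0, 0, 0], by simp [Fin.sum_univ_five]⟩
      · refine ⟨![0, 0, b₁⁻¹, 0, -(d₁ / (b₁ * (μ₂ * b₂ ^ 2)))], ?_⟩
        simp only [Fin.sum_univ_five, Fin.reduceFinMk, Matrix.cons_val_zero, Matrix.cons_val_one,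
          Matrix.cons_val]
        match_scalars <;> field_simp <;> ring
      · exact ⟨![0, b₂⁻¹, 0, 0, 0], by simp [Fin.sum_univ_five, hb₂]⟩
      · exact ⟨![0, 0, 0, 1, 0], by simp [Fin.sum_univ_five]⟩
      · refine ⟨![0, 0, 0, 0, (μ₂ * b₂ ^ 2)⁻¹], ?_⟩
        simp only [Fin.sum_univ_five, Fin.reduceFinMk, Matrix.cons_val_zero, Matrix.cons_val_one,
          Matrix.cons_val]
        match_scalars <;> field_simp <;> ring
  refine ⟨v, isN5Basis_of_sq_three ?_ ?_ ?_ ?_ ?_ ?_ hγδ⟩ <;>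
    simp only [hv, Matrix.cons_val_zero, Matrix.cons_val_one, Matrix.cons_val, map_add, map_smul,
      LinearMap.add_apply, LinearMap.smul_apply]
  · intro i j hij
    fin_cases i <;> fin_cases j <;> simp [hnat, hs4] at hij ⊢
  · rw [hs0]; module
  · rw [hs2]; module
  · rw [hnat 1 4 (by decide), hnat 4 1 (by decide), hs1, hs4]
    linear_combination (norm := module) H1 • e 4
  · rw [hs4, smul_zero, smul_zero]
  · rw [hs3]
    match_scalars <;> field_simp <;> first | ring1 | linear_combination hb'

include hnat in
theorem exists_isN5Basis_of_sq_three_eq_smul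
    {b₁ b₂ b₃ d μ₁ μ₂ μ₃ : F} (hb₁ : b₁ ≠ 0) (hμ₁ : μ₁ ≠ 0) (hμ₂ : μ₂ ≠ 0) (hμ₃ : μ₃ ≠ 0)
    (hs0 : m (e 0) (e 0) = b₁ • e 1 + b₂ • e 2 + b₃ • e 3 + d • e 4)
    (hs1 : m (e 1) (e 1) = μ₁ • e 4) (hs2 : m (e 2) (e 2) = μ₂ • e 4)
    (hs3 : m (e 3) (e 3) = μ₃ • e 4) (hs4 : m (e 4) (e 4) = 0)
    (H1 : μ₁ * b₁ ^ 2 + μ₂ * b₂ ^ 2 + μ₃ * b₃ ^ 2 = 0) :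
    ∃ v : Basis (Fin 5) F A, IsN5Basis m v := by
  set Q := μ₂ * b₂ ^ 2 + μ₃ * b₃ ^ 2
  have hQ : Q ≠ 0 := fun h =>
    mul_ne_zero hμ₁ (pow_ne_zero 2 hb₁) (by linear_combination H1 - h)
  obtain ⟨v, hv⟩ := exists_basis_coe_eq e
    ![e 0, b₂ • e 2 + b₃ • e 3, b₁ • e 1 + d • e 4, (μ₃ * b₃) • e 2 - (μ₂ * b₂) • e 3, Q • e 4]
    fun k => by
      fin_cases k
      · exact ⟨![1, 0, 0, 0, 0], by simp [Fin.sum_univ_five]⟩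
      · refine ⟨![0, 0, b₁⁻¹, 0, -(d / (b₁ * Q))], ?_⟩
        simp only [Fin.sum_univ_five, Fin.reduceFinMk, Matrix.cons_val_zero, Matrix.cons_val_one,
          Matrix.cons_val]
        match_scalars <;> field_simp <;> ring
      · refine ⟨![0, μ₂ * b₂ / Q, 0, b₃ / Q, 0], ?_⟩
        simp only [Fin.sum_univ_five, Fin.reduceFinMk, Matrix.cons_val_zero, Matrix.cons_val_one,
          Matrix.cons_val]
        match_scalars <;> field_simp <;> ring
      · refine ⟨![0, μ₃ * b₃ / Q, 0, -b₂ / Q, 0], ?_⟩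
        simp only [Fin.sum_univ_five, Fin.reduceFinMk, Matrix.cons_val_zero, Matrix.cons_val_one,
          Matrix.cons_val]
        match_scalars <;> field_simp <;> ring
      · exact ⟨![0, 0, 0, 0, Q⁻¹], by simp [Fin.sum_univ_five, smul_smul, hQ]⟩
  refine ⟨v, isN5Basis_of_sq_three (γ := 0) (δ := μ₂ * μ₃) ?_ ?_ ?_ ?_ ?_ ?_
    (Or.inr (mul_ne_zero hμ₂ hμ₃))⟩ <;>
    simp only [hv, Matrix.cons_val_zero, Matrix.cons_val_one, Matrix.cons_val, map_add, map_sub,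
      map_smul, LinearMap.add_apply, LinearMap.sub_apply, LinearMap.smul_apply]
  · intro i j hij
    fin_cases i <;> fin_cases j <;> simp [hnat, hs2, hs3, hs4] at hij ⊢ <;> module
  · rw [hs0]; module
  · rw [hnat 2 3 (by decide), hnat 3 2 (by decide), hs2, hs3]; module
  · rw [hnat 1 4 (by decide), hnat 4 1 (by decide), hs1, hs4]
    linear_combination (norm := module) H1 • e 4
  · rw [hs4, smul_zero, smul_zero]
  · rw [hnat 2 3 (by decide), hnat 3 2 (by decide), hs2, hs3]; module

include hnat in
theorem isDecomposable_of_sq_three_eq_zero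
    {b₁ b₂ b₃ b₄ c₃ c₄ : F} (hb₁ : b₁ ≠ 0) (hb₂ : b₂ ≠ 0) (hc₄ : c₄ ≠ 0)
    (hs0 : m (e 0) (e 0) = b₁ • e 1 + b₂ • e 2 + b₃ • e 3 + b₄ • e 4)
    (hs1 : m (e 1) (e 1) = c₃ • e 3 + c₄ • e 4)
    (hs12 : b₁ ^ 2 • m (e 1) (e 1) + b₂ ^ 2 • m (e 2) (e 2) = 0)
    (hs3 : m (e 3) (e 3) = 0) (hs4 : m (e 4) (e 4) = 0) :
    IsDecomposable m := by
  set f : A →ₗ[F] F :=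
    c₃ • e.coord 4 - c₄ • e.coord 3 + ((c₄ * b₃ - c₃ * b₄) / b₁) • e.coord 1 with hf
  have hf0 : f (m (e 0) (e 0)) = 0 := by simp [hf, hs0, hb₁]
  have hf1 : f (m (e 1) (e 1)) = 0 := by simp [hf, hs1, mul_comm]
  have hf2 : f (m (e 2) (e 2)) = 0 := by
    have h := congrArg f hs12
    simp only [map_add, map_smul, hf1, smul_zero, zero_add, map_zero, smul_eq_zero] at h
    exact h.resolve_left (pow_ne_zero 2 hb₂)
  refine isDecomposable_of_mul_eq_zero_of_apply_ne_zero f (x := e 3) (w := m (e 0) (e 0))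
    (fun y z => ?_) (fun y => ?_) ?_ ?_ hf0
  · simp [mul_eq_sum hnat y z, Fin.sum_univ_five, hf0, hf1, hf2, hs3, hs4]
  · rw [mul_basis_left hnat, hs3, smul_zero]
  · simpa [hf] using hc₄
  · intro h
    simpa [hs0, hb₁] using congrArg (fun x => e.repr x 1) h

include hcomm hnat hnil hpa h2 in
theorem exists_isN5Basis_of_not_isDecomposable (hindec : ¬ IsDecomposable m)
    (h01 : structConst m e 0 1 ≠ 0) (h02 : structConst m e 0 2 ≠ 0)
    (hs1 : m (e 1) (e 1) ≠ 0) (hs2 : m (e 2) (e 2) ≠ 0) (h14 : structConst m e 1 4 ≠ 0) :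
    ∃ v : Basis (Fin 5) F A, IsN5Basis m v := by
  have hself := structConst_self hcomm hnat hnil (e := e)
  have hpath : ∀ {p q l : Fin 5}, structConst m e p q ≠ 0 → structConst m e q l ≠ 0 →
      m (e l) (e l) = 0 := sq_eq_zero_of_structConst_ne_zero hcomm hnat hnil hpa h2
  have h10 := structConst_eq_zero_of_ne_zero hcomm hnat hnil hpa h2 h01
  have h20 := structConst_eq_zero_of_ne_zero hcomm hnat hnil hpa h2 h02
  have hs4 : m (e 4) (e 4) = 0 := hpath h01 h14
  have h12 : structConst m e 1 2 = 0 := by_contra fun h => hs2 (hpath h01 h)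
  have h21 : structConst m e 2 1 = 0 := by_contra fun h => hs1 (hpath h02 h)
  have hsq0 := sq_eq_sum_fin_five (m := m) (e := e) 0
  have hsq1 := sq_eq_sum_fin_five (m := m) (e := e) 1
  have hsq2 := sq_eq_sum_fin_five (m := m) (e := e) 2
  have hsq3 := sq_eq_sum_fin_five (m := m) (e := e) 3
  simp only [hself, h10, h20, h12, h21, zero_smul, zero_add] at hsq0 hsq1 hsq2
  by_cases hs3 : m (e 3) (e 3) = 0
  · refine absurd (isDecomposable_of_sq_three_eq_zero hnat h01 h02 h14 hsq0 hsq1 ?_ hs3 hs4) hindec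
    have h := sq_mul_sq_self hcomm hnat hnil hpa (e := e) 0
    simpa [mul_eq_sum hnat (m (e 0) (e 0)), Fin.sum_univ_five, hself, hs3, hs4, sq] using h
  have h13 : structConst m e 1 3 = 0 := by_contra fun h => hs3 (hpath h01 h)
  have h23 : structConst m e 2 3 = 0 := by_contra fun h => hs3 (hpath h02 h)
  have h30 : structConst m e 3 0 = 0 := by_contra fun h => hs1 (hpath h h01)
  have h24 : structConst m e 2 4 ≠ 0 := fun h => hs2 (by simp [hsq2, h23, h])
  simp only [h13, h23, h30, hself, zero_smul, zero_add, add_zero] at hsq1 hsq2 hsq3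
  have H00 := sum_structConst_mul_eq_zero hcomm hnat hnil hpa h2 (e := e) 0 0 4
  have H03 := sum_structConst_mul_eq_zero hcomm hnat hnil hpa h2 (e := e) 0 3 4
  simp only [Fin.sum_univ_five, hself, h30, mul_zero, zero_mul, add_zero, zero_add] at H00 H03
  by_cases h03 : structConst m e 0 3 = 0
  · simp only [h03, zero_smul, add_zero, mul_zero, zero_mul] at hsq0 H00 H03
    exact exists_isN5Basis_of_sq_three_mem_span hnat h02 h24 hsq0 hsq1 hsq2 hsq3 hs3 hs4
      (by linear_combination H00) (by linear_combination H03)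
  · have h31 : structConst m e 3 1 = 0 := by_contra fun h => hs1 (hpath h03 h)
    have h32 : structConst m e 3 2 = 0 := by_contra fun h => hs2 (hpath h03 h)
    simp only [h31, h32, zero_smul, zero_add] at hsq3
    have h34 : structConst m e 3 4 ≠ 0 := fun h => hs3 (by simp [hsq3, h])
    exact exists_isN5Basis_of_sq_three_eq_smul hnat h01 h14 h24 h34 hsq0 hsq1 hsq2 hsq3 hs4
      (by linear_combination H00)

include hcomm hnat hnil hpa h2 in
theorem exists_perm_structConst_ne_zero (hnotassoc : ¬ ∀ x y z : A, m (m x y) z = m x (m y z)) :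
    ∃ σ : Equiv.Perm (Fin 5), structConst m e (σ 0) (σ 1) ≠ 0 ∧
      structConst m e (σ 0) (σ 2) ≠ 0 ∧ m (e (σ 1)) (e (σ 1)) ≠ 0 ∧
      m (e (σ 2)) (e (σ 2)) ≠ 0 ∧ structConst m e (σ 1) (σ 4) ≠ 0 := by
  have hself := structConst_self hcomm hnat hnil (e := e)
  obtain ⟨p, q, hpq, hq⟩ := exists_structConst_ne_zero_of_not_assoc hcomm hnat hnotassoc
  obtain ⟨q', hq'q, hpq', hq'⟩ := exists_ne_structConst_ne_zero hcomm hnat hnil hpa hpq hq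
  obtain ⟨z, hqz⟩ := exists_structConst_ne_zero_of_sq_ne_zero hq
  have hz := sq_eq_zero_of_structConst_ne_zero hcomm hnat hnil hpa h2 hpq hqz
  have hp : m (e p) (e p) ≠ 0 := fun h => hpq (by simp [← repr_sq, h])
  obtain ⟨σ, hσ0, hσ1, hσ2, hσ4⟩ := exists_perm_fin_five
    (fun h => hpq (by rw [← h]; exact hself p)) (fun h => hpq' (by rw [← h]; exact hself p))
    (fun h => hp (by rw [h]; exact hz)) (Ne.symm hq'q) (fun h => hq (by rw [h]; exact hz))
    (fun h => hq' (by rw [h]; exact hz))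
  refine ⟨σ, ?_⟩
  rw [hσ0, hσ1, hσ2, hσ4]
  exact ⟨hpq, hpq', hq, hq', hqz⟩

end FinFive

/-- a 5-dimensional nil power-associative evolution algebra over a field of
characteristic ≠ 2, indecomposable and not associative, is isomorphic to one of
`N_{5,10}(α)`, `N_{5,11}(α)`, `N_{5,12}(α,β)`. -/
theorem nil_pa_nonassoc_indecomposable_dim5_classification
    (F : Type*) [Field F] (h2 : (2 : F) ≠ 0)
    (A : Type*) [AddCommGroup A] [Module F A]
    (m : A →ₗ[F] A →ₗ[F] A) (hcomm : ∀ x y : A, m x y = m y x)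
    (e : Module.Basis (Fin 5) F A)
    (hnat : ∀ i j : Fin 5, i ≠ j → m (e i) (e j) = 0)
    (hnil : ∀ a : A, ∃ k : ℕ, ppow m a k = 0)
    (hpa : ∀ (a : A) (i j : ℕ),
      m (ppow m a i) (ppow m a j) = ppow m a (i + j + 1))
    (hnotassoc : ¬ ∀ x y z : A, m (m x y) z = m x (m y z))
    (hindec : ¬ ∃ I J : Submodule F A,
      (∀ x ∈ I, ∀ y : A, m x y ∈ I) ∧ (∀ x ∈ J, ∀ y : A, m x y ∈ J) ∧
      I ≠ ⊥ ∧ J ≠ ⊥ ∧ IsCompl I J) :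
    ∃ v : Module.Basis (Fin 5) F A,
      (∀ i j : Fin 5, i ≠ j → m (v i) (v j) = 0) ∧
      m (v 0) (v 0) = v 1 + v 2 ∧
      m (v 1) (v 1) = v 4 ∧
      m (v 2) (v 2) = -v 4 ∧
      m (v 4) (v 4) = 0 ∧
      ((∃ α : F, α ≠ 0 ∧ m (v 3) (v 3) = α • v 4) ∨
       (∃ α : F, α ≠ 0 ∧ m (v 3) (v 3) = α • (v 1 + v 2)) ∨
       (∃ α β : F, α ≠ 0 ∧ β ≠ 0 ∧
          m (v 3) (v 3) = α • (v 1 + v 2) + β • v 4)) := by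
  obtain ⟨σ, h01, h02, hs1, hs2, h14⟩ :=
    exists_perm_structConst_ne_zero hcomm hnat hnil hpa h2 hnotassoc
  set e' := e.reindex σ.symm
  have he' (i : Fin 5) : e' i = e (σ i) := by simp [e']
  have hnat' (i j : Fin 5) (hij : i ≠ j) : m (e' i) (e' j) = 0 := by
    rw [he', he']
    exact hnat _ _ (σ.injective.ne hij)
  exact exists_isN5Basis_of_not_isDecomposable hcomm hnat' hnil hpa h2 hindec
    (by rwa [structConst_reindex]) (by rwa [structConst_reindex]) (by rwa [he'])
    (by rwa [he']) (by rwa [structConst_reindex])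
end

section
/- Let N be a 6-dimensional nil evolution algebra over a field F of characteristic ≠ 2 which is associative and indecomposable. Then N admits a natural basis (v_1, …, v_6) such that one of the following holds: (a) there exist nonzero α, β, γ, δ ∈ F with v_1·v_1 = v_6, v_2·v_2 = α·v_6, v_3·v_3 = β·v_6, v_4·v_4 = γ·v_6, v_5·v_5 = δ·v_6, v_6·v_6 = 0 (the algebra N_{6,16}(α,β,γ,δ)); or (b) there exist nonzero α, β, γ ∈ F with v_1·v_1 = v_5, v_2·v_2 = α·v_5 + β·v_6, v_3·v_3 = γ·v_6, v_4·v_4 = v_6, v_5·v_5 = v_6·v_6 = 0 (the algebra N_{6,17}(α,β,γ)); or (c) there exist nonzero α, β, γ, δ ∈ F with α·δ − β·γ ≠ 0 and v_1·v_1 = v_5, v_2·v_2 = α·v_5 + β·v_6, v_3·v_3 = γ·v_5 + δ·v_6, v_4·v_4 = v_6, v_5·v_5 = v_6·v_6 = 0 (the algebra N_{6,18}(α,β,γ,δ)). -/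
open Module Submodule Set

theorem Finset.exists_injective_range_eq_of_card_eq_four {ι : Type*} [DecidableEq ι]
    {S : Finset ι} (hS : S.card = 4) {c d : ι} (hc : c ∈ S) (hd : d ∈ S) (hcd : c ≠ d) :
    ∃ s : Fin 4 → ι, Function.Injective s ∧ Set.range s = S ∧ s 2 = c ∧ s 3 = d := by
  have hcard : ((S.erase c).erase d).card = 2 := by
    rw [Finset.card_erase_of_mem (Finset.mem_erase.2 ⟨hcd.symm, hd⟩),
      Finset.card_erase_of_mem hc, hS]
  obtain ⟨a, b, hab, hT⟩ := Finset.card_eq_two.1 hcard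
  have ha : a ∈ (S.erase c).erase d := hT ▸ Finset.mem_insert_self a {b}
  have hb : b ∈ (S.erase c).erase d :=
    hT ▸ Finset.mem_insert_of_mem (Finset.mem_singleton_self b)
  simp only [Finset.mem_erase] at ha hb
  have hS' : S = {c, d, a, b} := by
    rw [← hT, Finset.insert_erase (Finset.mem_erase.2 ⟨hcd.symm, hd⟩), Finset.insert_erase hc]
  refine ⟨![a, b, c, d], ?_, ?_, rfl, rfl⟩
  · simp only [Matrix.vecCons, Fin.cons_injective_iff]
    simp [*, Function.injective_of_subsingleton]
  · ext i
    simp only [hS', Matrix.range_cons, Matrix.range_empty, Finset.coe_insert,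
      Finset.coe_singleton, Set.mem_union, Set.mem_singleton_iff, Set.mem_insert_iff]
    tauto

section

variable {F A : Type*} [Field F] [AddCommGroup A] [Module F A]

theorem span_pair_eq_of_finrank_eq_two {N : Submodule F A} (hN : finrank F N = 2) {x y : A}
    (hx : x ∈ N) (hy : y ∈ N) (hx0 : x ≠ 0) (hxy : y ∉ F ∙ x) : span F {x, y} = N := by
  have := Module.finite_of_finrank_eq_succ hN
  have hle : span F {x, y} ≤ N := span_le.2 (Set.insert_subset_iff.2 ⟨hx, by simpa using hy⟩)
  have := Submodule.finiteDimensional_of_le hle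
  have hlt : F ∙ x < span F {x, y} :=
    lt_of_le_of_ne (span_mono (Set.singleton_subset_iff.2 (Set.mem_insert _ _)))
      fun h => hxy (h ▸ subset_span (Set.mem_insert_of_mem _ rfl))
  have h1 := finrank_lt_finrank_of_lt hlt
  have h2 := Submodule.finrank_mono hle
  rw [finrank_span_singleton hx0] at h1
  exact eq_of_le_of_finrank_eq hle (by omega)

theorem ne_zero_of_smul_add_smul_notMem_span_singleton {x y : A} {α β : F}
    (h : α • x + β • y ∉ F ∙ y) : α ≠ 0 := by
  rintro rfl
  rw [zero_smul, zero_add] at h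
  exact h (smul_mem _ _ (mem_span_singleton_self y))

end

namespace EvolutionAlgebra

variable {F A ι : Type*} [Field F] [AddCommGroup A] [Module F A]

def IsIdeal (m : A →ₗ[F] A →ₗ[F] A) (I : Submodule F A) : Prop :=
  ∀ x ∈ I, ∀ y : A, m x y ∈ I

def IsIndecomposable (m : A →ₗ[F] A →ₗ[F] A) : Prop :=
  ¬ ∃ I J : Submodule F A, IsIdeal m I ∧ IsIdeal m J ∧ I ≠ ⊥ ∧ J ≠ ⊥ ∧ IsCompl I J

def IsNatural (m : A →ₗ[F] A →ₗ[F] A) (v : ι → A) : Prop :=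
  ∀ i j, i ≠ j → m (v i) (v j) = 0

-- `v 0, …, v 5` are the `v₁, …, v₆` of the paper.
def IsN6_16 (m : A →ₗ[F] A →ₗ[F] A) (v : Fin 6 → A) : Prop :=
  ∃ α β γ δ : F, α ≠ 0 ∧ β ≠ 0 ∧ γ ≠ 0 ∧ δ ≠ 0 ∧
    m (v 0) (v 0) = v 5 ∧
    m (v 1) (v 1) = α • v 5 ∧
    m (v 2) (v 2) = β • v 5 ∧
    m (v 3) (v 3) = γ • v 5 ∧
    m (v 4) (v 4) = δ • v 5 ∧
    m (v 5) (v 5) = 0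

def IsN6_17 (m : A →ₗ[F] A →ₗ[F] A) (v : Fin 6 → A) : Prop :=
  ∃ α β γ : F, α ≠ 0 ∧ β ≠ 0 ∧ γ ≠ 0 ∧
    m (v 0) (v 0) = v 4 ∧
    m (v 1) (v 1) = α • v 4 + β • v 5 ∧
    m (v 2) (v 2) = γ • v 5 ∧
    m (v 3) (v 3) = v 5 ∧
    m (v 4) (v 4) = 0 ∧
    m (v 5) (v 5) = 0

def IsN6_18 (m : A →ₗ[F] A →ₗ[F] A) (v : Fin 6 → A) : Prop :=
  ∃ α β γ δ : F, α ≠ 0 ∧ β ≠ 0 ∧ γ ≠ 0 ∧ δ ≠ 0 ∧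
    α * δ - β * γ ≠ 0 ∧
    m (v 0) (v 0) = v 4 ∧
    m (v 1) (v 1) = α • v 4 + β • v 5 ∧
    m (v 2) (v 2) = γ • v 4 + δ • v 5 ∧
    m (v 3) (v 3) = v 5 ∧
    m (v 4) (v 4) = 0 ∧
    m (v 5) (v 5) = 0

theorem ker_le_map₂_of_isIndecomposable {m : A →ₗ[F] A →ₗ[F] A} (hind : IsIndecomposable m)
    (hA : finrank F A ≠ 1) : LinearMap.ker m ≤ map₂ m ⊤ ⊤ := by
  intro u hu
  by_contra hu'
  have hu0 : u ≠ 0 := fun h => hu' (h ▸ zero_mem _)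
  obtain ⟨C, hC, hCu⟩ := ((disjoint_span_singleton' hu0).2 hu').exists_isCompl
  refine hind ⟨C, F ∙ u, fun x _ y => hC (apply_mem_map₂ m trivial trivial), ?_, ?_,
    (span_singleton_eq_bot.not.2 hu0), hCu⟩
  · intro x hx y
    rw [(span_singleton_le_iff_mem u _).2 hu hx, LinearMap.zero_apply]
    exact zero_mem _
  · rintro rfl
    apply hA
    rw [← finrank_top, ← eq_top_of_bot_isCompl hCu, finrank_span_singleton hu0]

section Evolution

variable {m : A →ₗ[F] A →ₗ[F] A} {e : Basis ι F A}

theorem mul_basis_left (hnat : IsNatural m e) (i : ι) (y : A) :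
    m (e i) y = e.repr y i • m (e i) (e i) := by
  have h : m (e i) = (e.coord i).smulRight (m (e i) (e i)) := e.ext fun j => by
    obtain rfl | hij := eq_or_ne i j
    · simp
    · simp [hnat i j hij, Finsupp.single_eq_of_ne hij]
  exact LinearMap.congr_fun h y

theorem map₂_le_span_sq (hnat : IsNatural m e) :
    map₂ m ⊤ ⊤ ≤ span F (range fun i => m (e i) (e i)) := by
  refine map₂_le.2 fun x _ y _ => ?_
  have h : span F (range e) ≤ (span F (range fun i => m (e i) (e i))).comap (m.flip y) := by
    refine span_le.2 ?_
    rintro _ ⟨i, rfl⟩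
    rw [SetLike.mem_coe, mem_comap, LinearMap.flip_apply, mul_basis_left hnat]
    exact smul_mem _ _ (subset_span ⟨i, rfl⟩)
  exact h (e.span_eq ▸ mem_top)

theorem ker_eq_span_sq_eq_zero (hcomm : ∀ x y, m x y = m y x) (hnat : IsNatural m e) :
    LinearMap.ker m = span F (e '' {i | m (e i) (e i) = 0}) := by
  apply le_antisymm
  · intro x hx
    refine e.mem_span_image.2 fun i hi => by_contra fun hsq => Finsupp.mem_support_iff.1 hi ?_
    have h : m (e i) x = 0 := by rw [hcomm, LinearMap.mem_ker.1 hx, LinearMap.zero_apply]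
    rw [mul_basis_left hnat] at h
    exact (smul_eq_zero.1 h).resolve_right hsq
  · refine span_le.2 ?_
    rintro _ ⟨i, hi, rfl⟩
    refine LinearMap.mem_ker.2 (LinearMap.ext fun y => ?_)
    rw [mul_basis_left hnat, hi, smul_zero, LinearMap.zero_apply]

theorem finrank_ker_add_card [Fintype ι] (hcomm : ∀ x y, m x y = m y x) (hnat : IsNatural m e)
    {S : Finset ι} (hS : ∀ i, i ∈ S ↔ m (e i) (e i) ≠ 0) :
    finrank F (LinearMap.ker m) + S.card = Fintype.card ι := by
  classical
  have hZ : {i | m (e i) (e i) = 0} = range ((↑) : ↥(Sᶜ : Finset ι) → ι) := by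
    ext i
    simp [hS]
  rw [ker_eq_span_sq_eq_zero hcomm hnat, hZ, ← range_comp,
    finrank_span_eq_card (e.linearIndependent.comp _ Subtype.val_injective), Fintype.card_coe,
    Finset.card_compl, Nat.sub_add_cancel (Finset.card_le_univ S)]

theorem finrank_ker_le_card [Finite ι]
    (hker : LinearMap.ker m = span F (range fun i => m (e i) (e i)))
    {S : Finset ι} (hS : ∀ i, i ∈ S ↔ m (e i) (e i) ≠ 0) :
    finrank F (LinearMap.ker m) ≤ S.card := by
  classical
  have := e.finiteDimensional_of_finite
  have hle : LinearMap.ker m ≤ span F (S.image fun i => m (e i) (e i) : Set A) := by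
    rw [hker, span_le]
    rintro _ ⟨i, rfl⟩
    by_cases h0 : m (e i) (e i) = 0
    · simp only [h0, SetLike.mem_coe, zero_mem]
    · exact subset_span (Finset.mem_image_of_mem _ ((hS i).2 h0))
  exact (Submodule.finrank_mono hle).trans
    ((finrank_span_finset_le_card _).trans Finset.card_image_le)

theorem ppow_basis (hcomm : ∀ x y, m x y = m y x) (hnat : IsNatural m e) (i : ι) (n : ℕ) :
    ppow m (e i) (n + 1) = e.repr (m (e i) (e i)) i ^ n • m (e i) (e i) := by
  induction n with
  | zero => simp [ppow]
  | succ n ih =>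
    rw [ppow, ih, map_smul, LinearMap.smul_apply, hcomm (m (e i) (e i)),
      mul_basis_left hnat i (m (e i) (e i)), smul_smul, pow_succ]

theorem sq_mem_ker (hcomm : ∀ x y, m x y = m y x) (hnat : IsNatural m e)
    (hassoc : ∀ x y z, m (m x y) z = m x (m y z)) {i : ι} (hnil : ∃ k, ppow m (e i) k = 0) :
    m (e i) (e i) ∈ LinearMap.ker m := by
  obtain ⟨k, hk⟩ := hnil
  have hfix : m (m (e i) (e i)) (e i) = 0 := by
    rw [hcomm, mul_basis_left hnat i (m (e i) (e i))]
    rcases k with _ | n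
    · exact absurd hk (e.ne_zero i)
    rw [ppow_basis hcomm hnat, smul_eq_zero] at hk
    rcases hk with hc | hsq
    · rw [eq_zero_of_pow_eq_zero hc, zero_smul]
    · rw [hsq, smul_zero]
  refine LinearMap.mem_ker.2 (e.ext fun j => ?_)
  obtain rfl | hij := eq_or_ne i j
  · rw [hfix, LinearMap.zero_apply]
  · rw [hassoc, hnat i j hij, map_zero, LinearMap.zero_apply]

theorem isIdeal_span_image_sup (hnat : IsNatural m e) {T : Set ι} {P : Submodule F A}
    (hP : P ≤ LinearMap.ker m) (hT : ∀ i ∈ T, m (e i) (e i) ∈ P) :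
    IsIdeal m (span F (e '' T) ⊔ P) := by
  intro x hx y
  obtain ⟨a, ha, p, hp, rfl⟩ := mem_sup.1 hx
  have hT' : span F (e '' T) ≤ P.comap (m.flip y) := by
    refine span_le.2 ?_
    rintro _ ⟨i, hi, rfl⟩
    rw [SetLike.mem_coe, mem_comap, LinearMap.flip_apply, mul_basis_left hnat]
    exact smul_mem _ _ (hT i hi)
  rw [map_add, LinearMap.add_apply, LinearMap.mem_ker.1 (hP hp), LinearMap.zero_apply, add_zero]
  exact mem_sup_right (hT' ha)

theorem disjoint_span_image_sup (hcomm : ∀ x y, m x y = m y x) (hnat : IsNatural m e)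
    {T₁ T₂ : Set ι} (hT : Disjoint T₁ T₂) (hT₁ : ∀ i ∈ T₁, m (e i) (e i) ≠ 0)
    (hT₂ : ∀ i ∈ T₂, m (e i) (e i) ≠ 0) {P Q : Submodule F A} (hPQ : Disjoint P Q)
    (hP : P ≤ LinearMap.ker m) (hQ : Q ≤ LinearMap.ker m) :
    Disjoint (span F (e '' T₁) ⊔ P) (span F (e '' T₂) ⊔ Q) := by
  have hker : Disjoint (span F (e '' (T₁ ∪ T₂))) (LinearMap.ker m) := by
    rw [ker_eq_span_sq_eq_zero hcomm hnat]
    refine e.linearIndependent.disjoint_span_image (Set.disjoint_left.2 ?_)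
    rintro i (hi | hi)
    exacts [hT₁ i hi, hT₂ i hi]
  rw [disjoint_def]
  intro x hx₁ hx₂
  obtain ⟨a, ha, p, hp, rfl⟩ := mem_sup.1 hx₁
  obtain ⟨b, hb, q, hq, hbq⟩ := mem_sup.1 hx₂
  have hab : a - b = 0 := disjoint_def.1 hker _
    (sub_mem (span_mono (image_mono subset_union_left) ha)
      (span_mono (image_mono subset_union_right) hb))
    (by rw [show a - b = q - p by rw [sub_eq_sub_iff_add_eq_add, ← hbq, add_comm]]
        exact sub_mem (hQ hq) (hP hp))
  rw [sub_eq_zero] at hab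
  subst hab
  have ha0 : a = 0 := disjoint_def.1 (e.linearIndependent.disjoint_span_image hT) a ha hb
  subst ha0
  rw [zero_add, zero_add] at hbq
  rw [zero_add]
  exact disjoint_def.1 hPQ p hp (hbq ▸ hq)

theorem not_isIndecomposable_of_disjoint (hcomm : ∀ x y, m x y = m y x) (hnat : IsNatural m e)
    {P Q : Submodule F A} (hPQ : Disjoint P Q) (hsup : P ⊔ Q = LinearMap.ker m)
    (hP : P ≠ ⊥) (hQ : Q ≠ ⊥) (hsq : ∀ i, m (e i) (e i) ∈ P ∨ m (e i) (e i) ∈ Q) :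
    ¬ IsIndecomposable m := by
  have hPk : P ≤ LinearMap.ker m := hsup ▸ le_sup_left
  have hQk : Q ≤ LinearMap.ker m := hsup ▸ le_sup_right
  refine not_not_intro ⟨span F (e '' {i | m (e i) (e i) ≠ 0 ∧ m (e i) (e i) ∈ P}) ⊔ P,
    span F (e '' {i | m (e i) (e i) ∉ P}) ⊔ Q,
    isIdeal_span_image_sup hnat hPk fun i hi => hi.2,
    isIdeal_span_image_sup hnat hQk fun i hi => (hsq i).resolve_left hi,
    ne_bot_of_le_ne_bot hP le_sup_right, ne_bot_of_le_ne_bot hQ le_sup_right, ⟨?_, ?_⟩⟩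
  · refine disjoint_span_image_sup hcomm hnat ?_ (fun i hi => hi.1) ?_ hPQ hPk hQk
    · exact Set.disjoint_left.2 fun i (hi : _ ∧ _) (hi' : _ ∉ P) => hi' hi.2
    · exact fun i (hi : _ ∉ P) h0 => hi (h0 ▸ zero_mem P)
  · rw [codisjoint_iff, eq_top_iff, ← e.span_eq, span_le]
    rintro _ ⟨i, rfl⟩
    by_cases h0 : m (e i) (e i) = 0
    · have hi : e i ∈ LinearMap.ker m :=
        ker_eq_span_sq_eq_zero hcomm hnat ▸ subset_span ⟨i, h0, rfl⟩
      exact (sup_le_sup le_sup_right le_sup_right : P ⊔ Q ≤ _) (hsup ▸ hi)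
    by_cases hi : m (e i) (e i) ∈ P
    · exact mem_sup_left (mem_sup_left (subset_span ⟨i, ⟨h0, hi⟩, rfl⟩))
    · exact mem_sup_right (mem_sup_left (subset_span ⟨i, hi, rfl⟩))

theorem not_isIndecomposable_of_finrank_add_le [Finite ι] (hcomm : ∀ x y, m x y = m y x)
    (hnat : IsNatural m e) (hker : LinearMap.ker m = span F (range fun i => m (e i) (e i)))
    {P Q : Submodule F A} (hP : P ≠ ⊥) (hQ : Q ≠ ⊥) (hle : P ⊔ Q ≤ LinearMap.ker m)
    (hrank : finrank F P + finrank F Q ≤ finrank F (LinearMap.ker m))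
    (hsq : ∀ i, m (e i) (e i) ∈ P ∨ m (e i) (e i) ∈ Q) : ¬ IsIndecomposable m := by
  have := e.finiteDimensional_of_finite
  have hsup : P ⊔ Q = LinearMap.ker m := by
    refine le_antisymm hle (hker ▸ span_le.2 ?_)
    rintro _ ⟨i, rfl⟩
    exact (hsq i).elim (fun h => mem_sup_left h) (fun h => mem_sup_right h)
  have hPQ : Disjoint P Q := by
    have h := finrank_sup_add_finrank_inf_eq P Q
    rw [hsup] at h
    rw [disjoint_iff, ← finrank_eq_zero]
    omega
  exact not_isIndecomposable_of_disjoint hcomm hnat hPQ hsup hP hQ hsq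

theorem exists_basis_append [Fintype ι] (hcomm : ∀ x y, m x y = m y x) (hnat : IsNatural m e)
    {k l : ℕ} (s : Fin k → ι) (hs : Function.Injective s)
    (hS : ∀ i, m (e i) (e i) ≠ 0 → i ∈ range s) (u : Fin l → A)
    (hu : span F (range u) = LinearMap.ker m) (hcard : k + l = Fintype.card ι) :
    ∃ v : Basis (Fin (k + l)) F A, ⇑v = Fin.append (e ∘ s) u ∧ IsNatural m v := by
  have hspan : ⊤ ≤ span F (range (Fin.append (e ∘ s) u)) := by
    rw [← e.span_eq, span_le]
    rintro _ ⟨i, rfl⟩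
    by_cases h0 : m (e i) (e i) = 0
    · have hi : e i ∈ span F (range u) :=
        hu ▸ ker_eq_span_sq_eq_zero hcomm hnat ▸ subset_span ⟨i, h0, rfl⟩
      refine span_mono ?_ hi
      rintro _ ⟨j, rfl⟩
      exact ⟨Fin.natAdd k j, Fin.append_right _ _ j⟩
    · obtain ⟨j, rfl⟩ := hS i h0
      exact subset_span ⟨Fin.castAdd l j, Fin.append_left _ _ j⟩
  have hu0 : ∀ j y, m (u j) y = 0 := fun j y => by
    rw [LinearMap.mem_ker.1 (hu ▸ subset_span ⟨j, rfl⟩ : u j ∈ LinearMap.ker m),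
      LinearMap.zero_apply]
  have hrank : Fintype.card (Fin (k + l)) = finrank F A := by
    rw [Fintype.card_fin, hcard, finrank_eq_card_basis e]
  refine ⟨basisOfTopLeSpanOfCardEqFinrank _ hspan hrank,
    coe_basisOfTopLeSpanOfCardEqFinrank _ hspan hrank, ?_⟩
  rw [coe_basisOfTopLeSpanOfCardEqFinrank]
  intro i j hij
  induction i using Fin.addCases <;> induction j using Fin.addCases <;>
    simp only [Fin.append_left, Fin.append_right, Function.comp_apply, hu0]
  · exact hnat _ _ (hs.ne fun h => hij (by rw [h]))
  · rw [hcomm, hu0]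

theorem exists_isN6_16 [Fintype ι] (hι : Fintype.card ι = 6) (hcomm : ∀ x y, m x y = m y x)
    (hnat : IsNatural m e) (hsq : ∀ i, m (e i) (e i) ∈ LinearMap.ker m)
    (hrank : finrank F (LinearMap.ker m) = 1) {S : Finset ι}
    (hS : ∀ i, i ∈ S ↔ m (e i) (e i) ≠ 0) (hS5 : S.card = 5) :
    ∃ v : Basis (Fin 6) F A, IsNatural m v ∧ IsN6_16 m v := by
  have := e.finiteDimensional_of_finite
  set s : Fin 5 → ι := fun k => (S.equivFinOfCardEq hS5).symm k
  have hs : Function.Injective s := Subtype.val_injective.comp (Equiv.injective _)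
  have hs0 : ∀ k, m (e (s k)) (e (s k)) ≠ 0 := fun k => (hS _).1 (Subtype.prop _)
  have hline : F ∙ m (e (s 0)) (e (s 0)) = LinearMap.ker m :=
    eq_of_le_of_finrank_eq ((span_singleton_le_iff_mem _ _).2 (hsq _))
      (by rw [finrank_span_singleton (hs0 0), hrank])
  have hcoef (k) : ∃ c : F, c ≠ 0 ∧ m (e (s k)) (e (s k)) = c • m (e (s 0)) (e (s 0)) := by
    obtain ⟨c, hc⟩ := mem_span_singleton.1 (hline ▸ hsq (s k))
    exact ⟨c, fun h0 => hs0 k (by rw [← hc, h0, zero_smul]), hc.symm⟩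
  choose c hc0 hc using hcoef
  obtain ⟨v, hv, hvnat⟩ := exists_basis_append hcomm hnat s hs
    (fun i hi => ⟨S.equivFinOfCardEq hS5 ⟨i, (hS i).2 hi⟩, by simp [s]⟩)
    ![m (e (s 0)) (e (s 0))] (by rw [range_unique]; exact hline) (by rw [hι])
  refine ⟨v, hvnat, c 1, c 2, c 3, c 4, hc0 1, hc0 2, hc0 3, hc0 4, ?_⟩
  simp only [hv]
  exact ⟨rfl, hc 1, hc 2, hc 3, hc 4, LinearMap.congr_fun (LinearMap.mem_ker.1 (hsq _)) _⟩

theorem not_isIndecomposable_of_card_eq_three [Finite ι] (hcomm : ∀ x y, m x y = m y x)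
    (hnat : IsNatural m e) (hsq : ∀ i, m (e i) (e i) ∈ LinearMap.ker m)
    (hker : LinearMap.ker m = span F (range fun i => m (e i) (e i)))
    (hrank : finrank F (LinearMap.ker m) = 3) {S : Finset ι}
    (hS : ∀ i, i ∈ S ↔ m (e i) (e i) ≠ 0) (hS3 : S.card = 3) : ¬ IsIndecomposable m := by
  classical
  obtain ⟨a, b, c, -, -, -, rfl⟩ := Finset.card_eq_three.1 hS3
  have h0 : ∀ i ∈ ({a, b, c} : Finset ι), m (e i) (e i) ≠ 0 := fun i => (hS i).1
  refine not_isIndecomposable_of_finrank_add_le hcomm hnat hker (P := F ∙ m (e a) (e a))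
    (Q := span F (range ![m (e b) (e b), m (e c) (e c)])) ?_ ?_ ?_ ?_ ?_
  · exact span_singleton_eq_bot.not.2 (h0 a (by simp))
  · exact fun h => h0 b (by simp) ((mem_bot F).1 (h ▸ subset_span ⟨0, rfl⟩))
  · simp only [sup_le_iff, span_le, Set.singleton_subset_iff, Set.range_subset_iff,
      Fin.forall_fin_two]
    exact ⟨hsq a, hsq b, hsq c⟩
  · have := finrank_range_le_card (R := F) ![m (e b) (e b), m (e c) (e c)]
    rw [finrank_span_singleton (h0 a (by simp)), hrank]
    simp only [Set.finrank, Fintype.card_fin] at this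
    omega
  · intro i
    by_cases hi : i ∈ ({a, b, c} : Finset ι)
    · simp only [Finset.mem_insert, Finset.mem_singleton] at hi
      rcases hi with rfl | rfl | rfl
      exacts [.inl (mem_span_singleton_self _), .inr (subset_span ⟨0, rfl⟩),
        .inr (subset_span ⟨1, rfl⟩)]
    · rw [not_not.1 ((hS i).not.1 hi)]
      exact .inl (zero_mem _)

theorem not_isIndecomposable_of_sq_mem_span_singleton_or [Finite ι]
    (hcomm : ∀ x y, m x y = m y x) (hnat : IsNatural m e)
    (hker : LinearMap.ker m = span F (range fun i => m (e i) (e i)))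
    (hrank : finrank F (LinearMap.ker m) = 2) {x y : A} (hx : x ∈ LinearMap.ker m)
    (hy : y ∈ LinearMap.ker m) (hx0 : x ≠ 0) (hy0 : y ≠ 0)
    (hsq : ∀ i, m (e i) (e i) ≠ 0 → m (e i) (e i) ∈ F ∙ x ∨ m (e i) (e i) ∈ F ∙ y) :
    ¬ IsIndecomposable m := by
  refine not_isIndecomposable_of_finrank_add_le hcomm hnat hker
    (span_singleton_eq_bot.not.2 hx0) (span_singleton_eq_bot.not.2 hy0)
    (sup_le ((span_singleton_le_iff_mem _ _).2 hx) ((span_singleton_le_iff_mem _ _).2 hy))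
    (by rw [finrank_span_singleton hx0, finrank_span_singleton hy0, hrank]) fun i => ?_
  by_cases h0 : m (e i) (e i) = 0
  · exact .inl (h0 ▸ zero_mem _)
  · exact hsq i h0

theorem exists_basis_of_pair [Fintype ι] (hι : Fintype.card ι = 6)
    (hcomm : ∀ x y, m x y = m y x) (hnat : IsNatural m e) {s : Fin 4 → ι}
    (hs : Function.Injective s)
    (hS : ∀ i, m (e i) (e i) ≠ 0 → i ∈ range s) {x y : A}
    (hxy : span F {x, y} = LinearMap.ker m) :
    ∃ v : Basis (Fin 6) F A, ⇑v = Fin.append (e ∘ s) ![x, y] ∧ IsNatural m v :=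
  exists_basis_append hcomm hnat s hs hS ![x, y]
    (by rwa [Matrix.range_cons, Matrix.range_cons, Matrix.range_empty, Set.union_empty,
      Set.singleton_union]) (by rw [hι])

theorem exists_isN6_17 [Fintype ι] (hι : Fintype.card ι = 6) (hcomm : ∀ x y, m x y = m y x)
    (hnat : IsNatural m e) (hsq : ∀ i, m (e i) (e i) ∈ LinearMap.ker m)
    (hrank : finrank F (LinearMap.ker m) = 2) {s : Fin 4 → ι} (hs : Function.Injective s)
    (hS : ∀ i, m (e i) (e i) ≠ 0 → i ∈ range s)
    (h0 : m (e (s 0)) (e (s 0)) ≠ 0) (h2 : m (e (s 2)) (e (s 2)) ≠ 0)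
    (h30 : m (e (s 3)) (e (s 3)) ∉ F ∙ m (e (s 0)) (e (s 0)))
    (h10 : m (e (s 1)) (e (s 1)) ∉ F ∙ m (e (s 0)) (e (s 0)))
    (h13 : m (e (s 1)) (e (s 1)) ∉ F ∙ m (e (s 3)) (e (s 3)))
    (h23 : m (e (s 2)) (e (s 2)) ∈ F ∙ m (e (s 3)) (e (s 3))) :
    ∃ v : Basis (Fin 6) F A, IsNatural m v ∧ IsN6_17 m v := by
  have hpair := span_pair_eq_of_finrank_eq_two hrank (hsq _) (hsq _) h0 h30
  obtain ⟨α, β, h1⟩ := mem_span_pair.1 (hpair ▸ hsq (s 1))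
  obtain ⟨γ, h2'⟩ := mem_span_singleton.1 h23
  obtain ⟨v, hv, hvnat⟩ := exists_basis_of_pair hι hcomm hnat hs hS hpair
  refine ⟨v, hvnat, α, β, γ, ne_zero_of_smul_add_smul_notMem_span_singleton (h1 ▸ h13),
    ne_zero_of_smul_add_smul_notMem_span_singleton (x := m (e (s 3)) (e (s 3)))
      (by rwa [add_comm, h1]),
    fun hγ => h2 (by rw [← h2', hγ, zero_smul]), ?_⟩
  simp only [hv]
  exact ⟨rfl, h1.symm, h2'.symm, rfl, LinearMap.congr_fun (LinearMap.mem_ker.1 (hsq _)) _,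
    LinearMap.congr_fun (LinearMap.mem_ker.1 (hsq _)) _⟩

theorem exists_isN6_18 [Fintype ι] (hι : Fintype.card ι = 6) (hcomm : ∀ x y, m x y = m y x)
    (hnat : IsNatural m e) (hsq : ∀ i, m (e i) (e i) ∈ LinearMap.ker m)
    (hrank : finrank F (LinearMap.ker m) = 2) {s : Fin 4 → ι} (hs : Function.Injective s)
    (hS : ∀ i, m (e i) (e i) ≠ 0 → i ∈ range s)
    (hpar : ∀ i j, i ≠ j → m (e (s i)) (e (s i)) ∉ F ∙ m (e (s j)) (e (s j))) :
    ∃ v : Basis (Fin 6) F A, IsNatural m v ∧ IsN6_18 m v := by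
  have h0 : m (e (s 0)) (e (s 0)) ≠ 0 := fun h => hpar 0 1 (by decide) (h ▸ zero_mem _)
  have hpair := span_pair_eq_of_finrank_eq_two hrank (hsq _) (hsq _) h0 (hpar 3 0 (by decide))
  obtain ⟨α, β, h1⟩ := mem_span_pair.1 (hpair ▸ hsq (s 1))
  obtain ⟨γ, δ, h2⟩ := mem_span_pair.1 (hpair ▸ hsq (s 2))
  have hα : α ≠ 0 :=
    ne_zero_of_smul_add_smul_notMem_span_singleton (h1 ▸ hpar 1 3 (by decide))
  have hdet : α * δ - β * γ ≠ 0 := by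
    intro hdet
    refine hpar 2 1 (by decide) (mem_span_singleton.2 ⟨γ / α, ?_⟩)
    rw [← h1, ← h2]
    match_scalars
    · field_simp
    · field_simp
      linear_combination -hdet
  obtain ⟨v, hv, hvnat⟩ := exists_basis_of_pair hι hcomm hnat hs hS hpair
  refine ⟨v, hvnat, α, β, γ, δ, hα,
    ne_zero_of_smul_add_smul_notMem_span_singleton (x := m (e (s 3)) (e (s 3)))
      (by rw [add_comm, h1]; exact hpar 1 0 (by decide)),
    ne_zero_of_smul_add_smul_notMem_span_singleton (h2 ▸ hpar 2 3 (by decide)),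
    ne_zero_of_smul_add_smul_notMem_span_singleton (x := m (e (s 3)) (e (s 3)))
      (by rw [add_comm, h2]; exact hpar 2 0 (by decide)), hdet, ?_⟩
  simp only [hv]
  exact ⟨rfl, h1.symm, h2.symm, rfl, LinearMap.congr_fun (LinearMap.mem_ker.1 (hsq _)) _,
    LinearMap.congr_fun (LinearMap.mem_ker.1 (hsq _)) _⟩

theorem exists_isN6_17_of_mem_span_singleton [Fintype ι] (hι : Fintype.card ι = 6)
    (hcomm : ∀ x y, m x y = m y x) (hnat : IsNatural m e)
    (hsq : ∀ i, m (e i) (e i) ∈ LinearMap.ker m)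
    (hker : LinearMap.ker m = span F (range fun i => m (e i) (e i)))
    (hrank : finrank F (LinearMap.ker m) = 2) (hind : IsIndecomposable m) {s : Fin 4 → ι}
    (hs : Function.Injective s) (hS : ∀ i, m (e i) (e i) ≠ 0 → i ∈ range s)
    (hne : ∀ k, m (e (s k)) (e (s k)) ≠ 0)
    (h23 : m (e (s 2)) (e (s 2)) ∈ F ∙ m (e (s 3)) (e (s 3))) :
    ∃ v : Basis (Fin 6) F A, IsNatural m v ∧ IsN6_17 m v := by
  have hlines {k l : Fin 4} (hsq' : ∀ j, m (e (s j)) (e (s j)) ∈ F ∙ m (e (s k)) (e (s k)) ∨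
      m (e (s j)) (e (s j)) ∈ F ∙ m (e (s l)) (e (s l))) : ¬ IsIndecomposable m := by
    refine not_isIndecomposable_of_sq_mem_span_singleton_or hcomm hnat hker hrank (hsq _) (hsq _)
      (hne k) (hne l) fun i hi => ?_
    obtain ⟨j, rfl⟩ := hS i hi
    exact hsq' j
  have hself (k : Fin 4) := mem_span_singleton_self (R := F) (m (e (s k)) (e (s k)))
  by_cases h10 : m (e (s 1)) (e (s 1)) ∈ F ∙ m (e (s 0)) (e (s 0))
  · refine absurd hind (hlines (k := 0) (l := 3) fun j => ?_)
    fin_cases j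
    exacts [.inl (hself 0), .inl h10, .inr h23, .inr (hself 3)]
  by_cases h30 : m (e (s 3)) (e (s 3)) ∈ F ∙ m (e (s 0)) (e (s 0))
  · refine absurd hind (hlines (k := 0) (l := 1) fun j => ?_)
    fin_cases j
    exacts [.inl (hself 0), .inr (hself 1), .inl ((span_singleton_le_iff_mem _ _).2 h30 h23),
      .inl h30]
  by_cases h13 : m (e (s 1)) (e (s 1)) ∈ F ∙ m (e (s 3)) (e (s 3))
  · refine absurd hind (hlines (k := 3) (l := 0) fun j => ?_)
    fin_cases j
    exacts [.inr (hself 0), .inl h13, .inl h23, .inl (hself 3)]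
  exact exists_isN6_17 hι hcomm hnat hsq hrank hs hS (hne 0) (hne 2) h30 h10 h13 h23

theorem exists_isN6_17_or_isN6_18 [Fintype ι] (hι : Fintype.card ι = 6)
    (hcomm : ∀ x y, m x y = m y x) (hnat : IsNatural m e)
    (hsq : ∀ i, m (e i) (e i) ∈ LinearMap.ker m)
    (hker : LinearMap.ker m = span F (range fun i => m (e i) (e i)))
    (hrank : finrank F (LinearMap.ker m) = 2) (hind : IsIndecomposable m) {S : Finset ι}
    (hS : ∀ i, i ∈ S ↔ m (e i) (e i) ≠ 0) (hS4 : S.card = 4) :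
    ∃ v : Basis (Fin 6) F A, IsNatural m v ∧ (IsN6_17 m v ∨ IsN6_18 m v) := by
  classical
  have henum {c d : ι} (hc : c ∈ S) (hd : d ∈ S) (hcd : c ≠ d) :
      ∃ s : Fin 4 → ι, Function.Injective s ∧ (∀ i, m (e i) (e i) ≠ 0 → i ∈ range s) ∧
        (∀ k, s k ∈ S) ∧ s 2 = c ∧ s 3 = d := by
    obtain ⟨s, hs, hrange, hc, hd⟩ := S.exists_injective_range_eq_of_card_eq_four hS4 hc hd hcd
    exact ⟨s, hs, fun i hi => hrange ▸ (hS i).2 hi,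
      fun k => Finset.mem_coe.1 (hrange ▸ mem_range_self k), hc, hd⟩
  by_cases hpar : ∃ c ∈ S, ∃ d ∈ S, c ≠ d ∧ m (e c) (e c) ∈ F ∙ m (e d) (e d)
  · obtain ⟨c, hc, d, hd, hcd, h⟩ := hpar
    obtain ⟨s, hs, hS', hmem, rfl, rfl⟩ := henum hc hd hcd
    obtain ⟨v, hv, h17⟩ :=
      exists_isN6_17_of_mem_span_singleton hι hcomm hnat hsq hker hrank hind hs hS'
        (fun k => (hS _).1 (hmem k)) h
    exact ⟨v, hv, .inl h17⟩
  · push Not at hpar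
    obtain ⟨c, hc, d, hd, hcd⟩ := Finset.one_lt_card.1 (by omega : 1 < S.card)
    obtain ⟨s, hs, hS', hmem, -, -⟩ := henum hc hd hcd
    obtain ⟨v, hv, h18⟩ := exists_isN6_18 hι hcomm hnat hsq hrank hs hS'
      fun i j hij => hpar _ (hmem i) _ (hmem j) (hs.ne hij)
    exact ⟨v, hv, .inr h18⟩

end Evolution

end EvolutionAlgebra

open EvolutionAlgebra

theorem nil_assoc_indecomposable_dim6_classification_general
    (F : Type*) [Field F]
    (A : Type*) [AddCommGroup A] [Module F A]
    (m : A →ₗ[F] A →ₗ[F] A) (hcomm : ∀ x y : A, m x y = m y x)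
    (e : Module.Basis (Fin 6) F A)
    (hnat : ∀ i j : Fin 6, i ≠ j → m (e i) (e j) = 0)
    (hnil : ∀ a : A, ∃ k : ℕ, ppow m a k = 0)
    (hassoc : ∀ x y z : A, m (m x y) z = m x (m y z))
    (hindec : ¬ ∃ I J : Submodule F A,
      (∀ x ∈ I, ∀ y : A, m x y ∈ I) ∧ (∀ x ∈ J, ∀ y : A, m x y ∈ J) ∧
      I ≠ ⊥ ∧ J ≠ ⊥ ∧ IsCompl I J) :
    ∃ v : Module.Basis (Fin 6) F A,
      (∀ i j : Fin 6, i ≠ j → m (v i) (v j) = 0) ∧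
      ((∃ α β γ δ : F, α ≠ 0 ∧ β ≠ 0 ∧ γ ≠ 0 ∧ δ ≠ 0 ∧
          m (v 0) (v 0) = v 5 ∧
          m (v 1) (v 1) = α • v 5 ∧
          m (v 2) (v 2) = β • v 5 ∧
          m (v 3) (v 3) = γ • v 5 ∧
          m (v 4) (v 4) = δ • v 5 ∧
          m (v 5) (v 5) = 0) ∨
       (∃ α β γ : F, α ≠ 0 ∧ β ≠ 0 ∧ γ ≠ 0 ∧
          m (v 0) (v 0) = v 4 ∧
          m (v 1) (v 1) = α • v 4 + β • v 5 ∧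
          m (v 2) (v 2) = γ • v 5 ∧
          m (v 3) (v 3) = v 5 ∧
          m (v 4) (v 4) = 0 ∧
          m (v 5) (v 5) = 0) ∨
       (∃ α β γ δ : F, α ≠ 0 ∧ β ≠ 0 ∧ γ ≠ 0 ∧ δ ≠ 0 ∧
          α * δ - β * γ ≠ 0 ∧
          m (v 0) (v 0) = v 4 ∧
          m (v 1) (v 1) = α • v 4 + β • v 5 ∧
          m (v 2) (v 2) = γ • v 4 + δ • v 5 ∧
          m (v 3) (v 3) = v 5 ∧
          m (v 4) (v 4) = 0 ∧
          m (v 5) (v 5) = 0)) := by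
  classical
  have := e.finiteDimensional_of_finite
  have hι : Fintype.card (Fin 6) = 6 := Fintype.card_fin 6
  have hsq i : m (e i) (e i) ∈ LinearMap.ker m := sq_mem_ker hcomm hnat hassoc (hnil (e i))
  have hker : LinearMap.ker m = span F (range fun i => m (e i) (e i)) :=
    le_antisymm ((ker_le_map₂_of_isIndecomposable hindec (by simp [finrank_eq_card_basis e])).trans
      (map₂_le_span_sq hnat)) (span_le.2 (range_subset_iff.2 hsq))
  set S := Finset.univ.filter fun i => m (e i) (e i) ≠ 0
  have hS i : i ∈ S ↔ m (e i) (e i) ≠ 0 := by simp [S]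
  have hcard := finrank_ker_add_card hcomm hnat hS
  have hle := finrank_ker_le_card hker hS
  have hpos : finrank F (LinearMap.ker m) ≠ 0 := fun h0 => by
    have hS0 : S = ∅ := Finset.eq_empty_of_forall_notMem fun i hi =>
      (hS i).1 hi ((mem_bot F).1 (Submodule.finrank_eq_zero.1 h0 ▸ hsq i))
    simp [hS0, h0] at hcard
  obtain h | h | h : finrank F (LinearMap.ker m) = 1 ∨ finrank F (LinearMap.ker m) = 2 ∨
      finrank F (LinearMap.ker m) = 3 := by omega
  · obtain ⟨v, hv, h16⟩ := exists_isN6_16 hι hcomm hnat hsq h hS (by omega)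
    exact ⟨v, hv, .inl h16⟩
  · obtain ⟨v, hv, h1718⟩ := exists_isN6_17_or_isN6_18 hι hcomm hnat hsq hker h hindec hS (by omega)
    exact ⟨v, hv, .inr h1718⟩
  · exact absurd hindec (not_isIndecomposable_of_card_eq_three hcomm hnat hsq hker h hS (by omega))

/-- a 6-dimensional nil, associative, indecomposable evolution algebra over
a field of characteristic ≠ 2 is isomorphic to one of `N_{6,16}(α,β,γ,δ)`,
`N_{6,17}(α,β,γ)`, `N_{6,18}(α,β,γ,δ)`. -/
theorem nil_assoc_indecomposable_dim6_classification
    (F : Type*) [Field F] (h2 : (2 : F) ≠ 0)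
    (A : Type*) [AddCommGroup A] [Module F A]
    (m : A →ₗ[F] A →ₗ[F] A) (hcomm : ∀ x y : A, m x y = m y x)
    (e : Module.Basis (Fin 6) F A)
    (hnat : ∀ i j : Fin 6, i ≠ j → m (e i) (e j) = 0)
    (hnil : ∀ a : A, ∃ k : ℕ, ppow m a k = 0)
    (hassoc : ∀ x y z : A, m (m x y) z = m x (m y z))
    (hindec : ¬ ∃ I J : Submodule F A,
      (∀ x ∈ I, ∀ y : A, m x y ∈ I) ∧ (∀ x ∈ J, ∀ y : A, m x y ∈ J) ∧
      I ≠ ⊥ ∧ J ≠ ⊥ ∧ IsCompl I J) :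
    ∃ v : Module.Basis (Fin 6) F A,
      (∀ i j : Fin 6, i ≠ j → m (v i) (v j) = 0) ∧
      ((∃ α β γ δ : F, α ≠ 0 ∧ β ≠ 0 ∧ γ ≠ 0 ∧ δ ≠ 0 ∧
          m (v 0) (v 0) = v 5 ∧
          m (v 1) (v 1) = α • v 5 ∧
          m (v 2) (v 2) = β • v 5 ∧
          m (v 3) (v 3) = γ • v 5 ∧
          m (v 4) (v 4) = δ • v 5 ∧
          m (v 5) (v 5) = 0) ∨
       (∃ α β γ : F, α ≠ 0 ∧ β ≠ 0 ∧ γ ≠ 0 ∧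
          m (v 0) (v 0) = v 4 ∧
          m (v 1) (v 1) = α • v 4 + β • v 5 ∧
          m (v 2) (v 2) = γ • v 5 ∧
          m (v 3) (v 3) = v 5 ∧
          m (v 4) (v 4) = 0 ∧
          m (v 5) (v 5) = 0) ∨
       (∃ α β γ δ : F, α ≠ 0 ∧ β ≠ 0 ∧ γ ≠ 0 ∧ δ ≠ 0 ∧
          α * δ - β * γ ≠ 0 ∧
          m (v 0) (v 0) = v 4 ∧
          m (v 1) (v 1) = α • v 4 + β • v 5 ∧
          m (v 2) (v 2) = γ • v 4 + δ • v 5 ∧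
          m (v 3) (v 3) = v 5 ∧
          m (v 4) (v 4) = 0 ∧
          m (v 5) (v 5) = 0)) :=
  nil_assoc_indecomposable_dim6_classification_general F A m hcomm e hnat hnil hassoc hindec
end
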